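/- Given any Morse matching M on a connected simplicial complex Δ, there exists a Morse matching M′ with exactly one critical vertex, the same number of critical faces in every dimension ≥ 2 as M, and total number of critical faces c(M′) ≤ c(M). -/

import Mathlib

open Finset

variable {V : Type*} [DecidableEq V]

/-- A finite abstract simplicial complex on vertex set `V`: a finite family of
nonempty finite subsets closed under taking nonempty subsets. -/
structure SC (V : Type*) [DecidableEq V] where
  faces : Finset (Finset V)
  nonempty_mem : ∀ F ∈ faces, F.Nonempty
  down_closed : ∀ F ∈ faces, ∀ G : Finset V, G.Nonempty → G ⊆ F → G ∈ faces

/-- Arcs of the Hasse diagram: pairs `(G, F)` with `F ≺ G` (covering relation),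
directed from the higher- to the lower-dimensional face. -/
def arcs (Δ : SC V) : Finset (Finset V × Finset V) :=
  (Δ.faces ×ˢ Δ.faces).filter fun p => p.2 ⊆ p.1 ∧ p.2.card + 1 = p.1.card

/-- The set `δ(F)` of arcs incident to the face `F`. -/
def inc (Δ : SC V) (F : Finset V) : Finset (Finset V × Finset V) :=
  (arcs Δ).filter fun a => a.1 = F ∨ a.2 = F

/-- `M` is a matching in the Hasse diagram: a set of arcs such that each face is
incident to at most one arc of `M`. -/
def IsMatching (Δ : SC V) (M : Finset (Finset V × Finset V)) : Prop :=
  M ⊆ arcs Δ ∧ ∀ a ∈ M, ∀ b ∈ M, a ≠ b →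
    a.1 ≠ b.1 ∧ a.1 ≠ b.2 ∧ a.2 ≠ b.1 ∧ a.2 ≠ b.2

/-- The arc relation of the modified Hasse diagram `H(M)`: arcs of `H` with the
arcs of `M` reversed. -/
def HMrel (Δ : SC V) (M : Finset (Finset V × Finset V)) (X Y : Finset V) : Prop :=
  ((X, Y) ∈ arcs Δ ∧ (X, Y) ∉ M) ∨ (Y, X) ∈ M

/-- A simple directed cycle of length `n` in the relation `r`,
given as an injective cyclic sequence of vertices. -/
def IsDirCycle {α : Type*} (r : α → α → Prop) (n : ℕ) (c : ZMod n → α) : Prop :=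
  2 ≤ n ∧ Function.Injective c ∧ ∀ i, r (c i) (c (i + 1))

/-- A Morse matching: a matching `M` such that `H(M)` is acyclic. -/
def IsMorse (Δ : SC V) (M : Finset (Finset V × Finset V)) : Prop :=
  IsMatching Δ M ∧ ∀ (n : ℕ) (c : ZMod n → Finset V), ¬ IsDirCycle (HMrel Δ M) n c

/-- The graph of the simplicial complex `Δ`: two vertices are adjacent iff they
form a `1`-face of `Δ`. -/
def graphOf (Δ : SC V) : SimpleGraph V where
  Adj u v := u ≠ v ∧ ({u, v} : Finset V) ∈ Δ.faces
  symm := by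
    constructor
    rintro u v ⟨h1, h2⟩
    exact ⟨h1.symm, by rwa [Finset.pair_comm]⟩
  loopless := by constructor; rintro u ⟨h1, -⟩; exact h1 rfl

/-- The number of critical (unmatched) faces of dimension `j` of the matching
`M` (faces of dimension `j` have cardinality `j + 1`). -/
def critCount (Δ : SC V) (M : Finset (Finset V × Finset V)) (j : ℕ) : ℕ :=
  (Δ.faces.filter fun F => F.card = j + 1 ∧ ∀ a ∈ M, a.1 ≠ F ∧ a.2 ≠ F).card

/-- The total number of critical (unmatched) faces of the matching `M`. -/
def critTotal (Δ : SC V) (M : Finset (Finset V × Finset V)) : ℕ :=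
  (Δ.faces.filter fun F => ∀ a ∈ M, a.1 ≠ F ∧ a.2 ≠ F).card


section Helpers

variable {Δ : SC V} {M : Finset (Finset V × Finset V)}

lemma mem_arcs' {a : Finset V × Finset V} :
    a ∈ arcs Δ ↔ a.1 ∈ Δ.faces ∧ a.2 ∈ Δ.faces ∧ a.2 ⊆ a.1 ∧ a.2.card + 1 = a.1.card := by
  cases a; simp [arcs, and_assoc]

lemma hm_mem_faces (hM : M ⊆ arcs Δ) {X Y : Finset V} (h : HMrel Δ M X Y) :
    X ∈ Δ.faces ∧ Y ∈ Δ.faces := by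
  rcases h with ⟨h, -⟩ | h
  · exact ⟨(mem_arcs'.1 h).1, (mem_arcs'.1 h).2.1⟩
  · have := mem_arcs'.1 (hM h); exact ⟨this.2.1, this.1⟩

lemma hmrel_irrefl (hM : M ⊆ arcs Δ) (X : Finset V) : ¬ HMrel Δ M X X := by
  rintro (⟨h, -⟩ | h)
  · have := (mem_arcs'.1 h).2.2.2; simp at this
  · have := (mem_arcs'.1 (hM h)).2.2.2; simp at this

lemma transGen_mem_faces (hM : M ⊆ arcs Δ) {X Y : Finset V}
    (h : Relation.TransGen (HMrel Δ M) X Y) : X ∈ Δ.faces ∧ Y ∈ Δ.faces := by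
  induction h with
  | single h => exact hm_mem_faces hM h
  | tail _ h ih => exact ⟨ih.1, (hm_mem_faces hM h).2⟩

/-- From a closed walk one can extract a simple directed cycle; hence an
acyclic relation (with no loops) has irreflexive transitive closure. -/
lemma transGen_irrefl {α : Type*} {r : α → α → Prop}
    (hirr : ∀ x, ¬ r x x)
    (hnc : ∀ (n : ℕ) (c : ZMod n → α), ¬ IsDirCycle r n c)
    (x : α) : ¬ Relation.TransGen r x x := by
  intro hx
  classical
  -- turn the transitive chain into an indexed walk
  have walk : ∀ {a b : α}, Relation.TransGen r a b →
      ∃ (n : ℕ) (f : ℕ → α), 0 < n ∧ f 0 = a ∧ f n = b ∧ ∀ i < n, r (f i) (f (i + 1)) := by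
    intro a b h
    induction h with
    | @single b h =>
      refine ⟨1, fun i => if i = 0 then a else b, by omega, by simp, by simp, ?_⟩
      intro i hi
      have : i = 0 := by omega
      subst this; simpa using h
    | @tail b c hab h ih =>
      obtain ⟨n, f, hn, h0, hlast, hstep⟩ := ih
      refine ⟨n + 1, fun i => if i = n + 1 then c else f i, by omega,
        by simp only [if_neg (by omega : ¬ (0 = n + 1))]; exact h0, by simp, ?_⟩
      intro i hi
      rcases Nat.lt_or_ge i n with h' | h'
      · simpa [Nat.ne_of_lt (by omega : i < n+1), Nat.ne_of_lt (by omega : i+1 < n+1), Nat.ne_of_lt h']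
          using hstep i h'
      · have hin : i = n := by omega
        subst hin
        simpa [Nat.ne_of_lt (by omega : i < i+1), hlast] using h
  -- minimal closed walk
  have hex : ∃ n : ℕ, 0 < n ∧ ∃ f : ℕ → α, f 0 = f n ∧ ∀ i < n, r (f i) (f (i + 1)) := by
    obtain ⟨n, f, hn, h0, hlast, hstep⟩ := walk hx
    exact ⟨n, hn, f, by rw [h0, hlast], hstep⟩
  obtain ⟨hNpos, f, hf0, hfstep⟩ := Nat.find_spec hex
  set N := Nat.find hex with hNdef
  have hmin : ∀ m, m < N → ¬ (0 < m ∧ ∃ g : ℕ → α, g 0 = g m ∧ ∀ i < m, r (g i) (g (i + 1))) :=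
    fun m hm => Nat.find_min hex hm
  -- N ≥ 2
  have hN2 : 2 ≤ N := by
    by_contra h
    have : N = 1 := by omega
    rw [this] at hf0
    exact hirr (f 0) (by nth_rewrite 2 [hf0]; exact hfstep 0 (by omega))
  -- injectivity of f on [0, N)
  have hinj : ∀ i j, i < j → j < N → f i ≠ f j := by
    intro i j hij hjN heq
    refine hmin (j - i) (by omega) ⟨by omega, fun k => f (i + k), ?_, ?_⟩
    · simp only [Nat.add_zero]
      rw [heq]; congr 1; omega
    · intro k hk
      show r (f (i + k)) (f (i + (k + 1)))
      have : i + (k + 1) = i + k + 1 := by omega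
      rw [this]
      exact hfstep (i + k) (by omega)
  haveI : NeZero N := ⟨by omega⟩
  set c : ZMod N → α := fun i => f i.val with hc
  have hvala : ∀ i : ZMod N, i.val < N := fun i => ZMod.val_lt i
  apply hnc N c
  refine ⟨hN2, ?_, ?_⟩
  · intro i j hij
    by_contra hne
    have hv : i.val ≠ j.val := fun h => hne (ZMod.val_injective N h)
    rcases Nat.lt_or_ge i.val j.val with h' | h'
    · exact hinj i.val j.val h' (hvala j) hij
    · exact hinj j.val i.val (by omega) (hvala i) hij.symm
  · intro i
    have hone : (1 : ZMod N).val = 1 := ZMod.val_one_eq_one_mod N ▸ Nat.mod_eq_of_lt (by omega)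
    have hadd : (i + 1).val = (i.val + 1) % N := by
      rw [ZMod.val_add, hone]
    rcases Nat.lt_or_ge (i.val + 1) N with h' | h'
    · have : (i + 1).val = i.val + 1 := by rw [hadd, Nat.mod_eq_of_lt h']
      show r (f i.val) (f (i + 1).val)
      rw [this]
      exact hfstep i.val (by omega)
    · have hiv : i.val = N - 1 := by have := hvala i; omega
      have : (i + 1).val = 0 := by rw [hadd, hiv]; simp [Nat.sub_add_cancel (by omega : 1 ≤ N)]
      show r (f i.val) (f (i + 1).val)
      rw [this, hiv, hf0]
      have := hfstep (N - 1) (by omega)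
      rwa [Nat.sub_add_cancel (by omega : 1 ≤ N)] at this

end Helpers

section Gamma

variable {Δ : SC V} {M : Finset (Finset V × Finset V)}

lemma hm_transGen_irrefl (hM : IsMorse Δ M) (X : Finset V) :
    ¬ Relation.TransGen (HMrel Δ M) X X :=
  transGen_irrefl (hmrel_irrefl hM.1.1) hM.2 X

/-- The reversed reachability relation of `H(M)` is well-founded. -/
lemma hm_wf (hM : IsMorse Δ M) :
    WellFounded (fun a b : Finset V => Relation.TransGen (HMrel Δ M) b a) := by
  classical
  set r : Finset V → Finset V → Prop := fun a b => Relation.TransGen (HMrel Δ M) b a with hr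
  set r' : {F // F ∈ Δ.faces} → {F // F ∈ Δ.faces} → Prop :=
    fun a b => Relation.TransGen (HMrel Δ M) b.1 a.1 with hr'
  haveI : IsTrans {F // F ∈ Δ.faces} r' := ⟨fun a b c hab hbc => hbc.trans hab⟩
  haveI : IsIrrefl {F // F ∈ Δ.faces} r' := ⟨fun a h => hm_transGen_irrefl hM a.1 h⟩
  have hwf' : WellFounded r' := Finite.wellFounded_of_trans_of_irrefl r'
  constructor
  intro a
  by_cases ha : a ∈ Δ.faces
  · have key : ∀ s : {F // F ∈ Δ.faces}, Acc r s.1 := by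
      intro s
      induction s using hwf'.induction with
      | _ s ih =>
        constructor
        intro y hy
        have hyf : y ∈ Δ.faces := (transGen_mem_faces hM.1.1 hy).2
        exact ih ⟨y, hyf⟩ hy
    exact key ⟨a, ha⟩
  · constructor
    intro y hy
    exact absurd (transGen_mem_faces hM.1.1 hy).1 ha

/-- The graph `Γ(M)`: edges of `Δ` not matched with a triangle in `M`. -/
def Gam (Δ : SC V) (M : Finset (Finset V × Finset V)) : SimpleGraph V where
  Adj u v := u ≠ v ∧ ({u, v} : Finset V) ∈ Δ.faces ∧ ∀ t, (t, ({u, v} : Finset V)) ∉ M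
  symm := by
    constructor
    rintro u v ⟨h1, h2, h3⟩
    refine ⟨h1.symm, by rwa [Finset.pair_comm], fun t => by rw [Finset.pair_comm]; exact h3 t⟩
  loopless := by constructor; rintro u ⟨h1, -⟩; exact h1 rfl

lemma gam_edge_reach (hM : IsMorse Δ M) :
    ∀ e : Finset V, ∀ u v : V, e = {u, v} → u ≠ v → e ∈ Δ.faces →
      (Gam Δ M).Reachable u v := by
  classical
  intro e
  induction e using (hm_wf hM).induction with
  | _ e ih =>
    intro u v he huv hef
    have hecard : e.card = 2 := by
      rw [he, Finset.card_insert_of_notMem (by simp [huv]), Finset.card_singleton]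
    by_cases hmt : ∃ t, (t, e) ∈ M
    · obtain ⟨t, ht⟩ := hmt
      have htarc := mem_arcs'.1 (hM.1.1 ht)
      have htf : t ∈ Δ.faces := htarc.1
      have het : e ⊆ t := htarc.2.2.1
      have htcard : t.card = 3 := by have := htarc.2.2.2; simp at this; omega
      -- the third vertex
      have hsd : (t \ e).card = 1 := by
        rw [Finset.card_sdiff_of_subset het]; omega
      obtain ⟨w, hw⟩ := Finset.card_eq_one.1 hsd
      have hwt : w ∈ t := by
        have : w ∈ t \ e := by rw [hw]; simp
        exact (Finset.mem_sdiff.1 this).1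
      have hwe : w ∉ e := by
        have : w ∈ t \ e := by rw [hw]; simp
        exact (Finset.mem_sdiff.1 this).2
      have hwu : w ≠ u := fun h => hwe (by rw [he, h]; simp)
      have hwv : w ≠ v := fun h => hwe (by rw [he, h]; simp)
      have hue : u ∈ e := by rw [he]; simp
      have hve : v ∈ e := by rw [he]; simp
      have hut : u ∈ t := het hue
      have hvt : v ∈ t := het hve
      -- the two other edges of the triangle
      have key : ∀ x y : V, x ≠ y → x ∈ t → y ∈ t → ({x, y} : Finset V) ≠ e →
          (Gam Δ M).Reachable x y := by
        intro x y hxy hxt hyt hne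
        have hsub : ({x, y} : Finset V) ⊆ t := by
          intro z hz; simp at hz; rcases hz with rfl | rfl <;> assumption
        have hfface : ({x, y} : Finset V) ∈ Δ.faces :=
          Δ.down_closed t htf _ ⟨x, by simp⟩ hsub
        have hcard2 : ({x, y} : Finset V).card = 2 := by
          rw [Finset.card_insert_of_notMem (by simp [hxy]), Finset.card_singleton]
        have harc : (t, ({x, y} : Finset V)) ∈ arcs Δ :=
          mem_arcs'.2 ⟨htf, hfface, hsub, by simp [hcard2, htcard]⟩
        have hnotM : (t, ({x, y} : Finset V)) ∉ M := by
          intro hmem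
          by_cases heq : (t, ({x, y} : Finset V)) = (t, e)
          · exact hne (by injection heq)
          · exact (hM.1.2 _ hmem _ ht heq).1 rfl
        have hrel1 : HMrel Δ M e t := Or.inr ht
        have hrel2 : HMrel Δ M t {x, y} := Or.inl ⟨harc, hnotM⟩
        have htg : Relation.TransGen (HMrel Δ M) e {x, y} :=
          (Relation.TransGen.single hrel1).tail hrel2
        exact ih _ htg x y rfl hxy hfface
      have h1 : (Gam Δ M).Reachable u w := by
        refine key u w (Ne.symm hwu) hut hwt ?_
        intro h
        exact hwe (by rw [← h]; simp)
      have h2 : (Gam Δ M).Reachable w v := by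
        refine key w v hwv hwt hvt ?_
        intro h
        exact hwe (by rw [← h]; simp)
      exact h1.trans h2
    · push_neg at hmt
      have : (Gam Δ M).Adj u v := ⟨huv, he ▸ hef, fun t => he ▸ hmt t⟩
      exact this.reachable

lemma gam_connected (hM : IsMorse Δ M) (hconn : (graphOf Δ).Connected) :
    (Gam Δ M).Connected := by
  have hpre : (Gam Δ M).Preconnected := by
    intro u v
    obtain ⟨p⟩ := hconn.preconnected u v
    induction p with
    | nil => exact SimpleGraph.Reachable.refl _
    | cons h q ih =>
      rename_i a b c
      exact (gam_edge_reach hM {a, b} a b rfl h.1 h.2).trans ih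
  haveI := hconn.nonempty
  exact ⟨hpre⟩

lemma singleton_face (hconn : (graphOf Δ).Connected) (hdim : ∃ F ∈ Δ.faces, 2 ≤ F.card)
    (v : V) : ({v} : Finset V) ∈ Δ.faces := by
  obtain ⟨F, hF, hcard⟩ := hdim
  obtain ⟨u0, hu0⟩ := Finset.card_pos.1 (by omega : 0 < F.card)
  obtain ⟨p⟩ := hconn.preconnected v u0
  cases p with
  | nil => exact Δ.down_closed F hF {v} ⟨v, by simp⟩ (Finset.singleton_subset_iff.2 hu0)
  | cons h q =>
    rename_i b
    exact Δ.down_closed _ h.2 {v} ⟨v, by simp⟩ (by simp)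

lemma finite_V (hconn : (graphOf Δ).Connected) (hdim : ∃ F ∈ Δ.faces, 2 ≤ F.card) :
    Finite V := by
  have h : (Set.univ : Set V) ⊆ ↑(Δ.faces.sup id) := by
    intro v _
    have hv := singleton_face hconn hdim v
    have : v ∈ Δ.faces.sup id := Finset.mem_sup.2 ⟨{v}, hv, by simp⟩
    exact this
  exact Set.finite_univ_iff.1 (Set.Finite.subset (Finset.finite_toSet _) h)

end Gamma

section Alternate

variable {Δ : SC V}

lemma cycle_alternates {M₀ : Finset (Finset V × Finset V)} (hm : IsMatching Δ M₀)
    {n : ℕ} {c : ZMod n → Finset V} (hc : IsDirCycle (HMrel Δ M₀) n c) :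
    ∃ m : ℕ, (∀ i, m ≤ (c i).card) ∧ ∀ i : ZMod n,
      ((c i).card = m ∧ (c (i+1), c i) ∈ M₀) ∨
      ((c i).card = m + 1 ∧ (c i, c (i+1)) ∈ arcs Δ ∧ (c i, c (i+1)) ∉ M₀) := by
  classical
  obtain ⟨hn2, hinj, hstep⟩ := hc
  haveI : NeZero n := ⟨by omega⟩
  haveI : Fact (1 < n) := ⟨by omega⟩
  haveI : Nonempty (ZMod n) := ⟨0⟩
  have cardrel : ∀ i : ZMod n,
      ((c (i+1), c i) ∈ M₀ ∧ (c i).card + 1 = (c (i+1)).card) ∨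
      ((c i, c (i+1)) ∈ arcs Δ ∧ (c i, c (i+1)) ∉ M₀ ∧ (c (i+1)).card + 1 = (c i).card) := by
    intro i
    rcases hstep i with ⟨h, hnm⟩ | h
    · right; exact ⟨h, hnm, (mem_arcs'.1 h).2.2.2⟩
    · left; exact ⟨h, (mem_arcs'.1 (hm.1 h)).2.2.2⟩
  obtain ⟨i0, hi0min⟩ : ∃ i0 : ZMod n, ∀ i : ZMod n, (c i0).card ≤ (c i).card :=
    Finite.exists_min (fun i => (c i).card)
  set m := (c i0).card with hm_def
  refine ⟨m, hi0min, ?_⟩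
  have claimA : ∀ i : ZMod n, (c i).card = m →
      (c (i+1), c i) ∈ M₀ ∧ (c (i+1)).card = m + 1 := by
    intro i hi
    rcases cardrel i with ⟨h1, h2⟩ | ⟨-, -, h3⟩
    · exact ⟨h1, by omega⟩
    · have := hi0min (i+1); omega
  have claimB : ∀ i : ZMod n, (c (i+1), c i) ∈ M₀ →
      (c (i+1), c (i+1+1)) ∈ arcs Δ ∧ (c (i+1), c (i+1+1)) ∉ M₀ ∧
        (c (i+1+1)).card + 1 = (c (i+1)).card := by
    intro i hi
    rcases cardrel (i+1) with ⟨h1, -⟩ | ⟨h2, h3, h4⟩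
    · exfalso
      by_cases heq : ((c (i+1), c i) : _ × _) = (c (i+1+1), c (i+1))
      · have h5 : c i = c (i+1) := (Prod.ext_iff.1 heq).2
        have h6 : i = i + 1 := hinj h5
        have h7 : (0 : ZMod n) = 1 := by
          have := add_left_cancel (a := i) (b := (0 : ZMod n)) (c := 1)
          exact this (by simpa using h6)
        exact zero_ne_one h7
      · exact (hm.2 _ hi _ h1 heq).2.1 rfl
    · exact ⟨h2, h3, h4⟩
  have main : ∀ k : ℕ, (c (i0 + (2*k : ℕ))).card = m := by
    intro k
    induction k with
    | zero => simp [hm_def]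
    | succ k ihk =>
      obtain ⟨hmat, hcard1⟩ := claimA _ ihk
      obtain ⟨-, -, hcard2⟩ := claimB _ hmat
      have hidx : (i0 + ((2*(k+1) : ℕ) : ZMod n)) = i0 + ((2*k : ℕ) : ZMod n) + 1 + 1 := by
        push_cast; ring
      rw [hidx]
      omega
  have full : ∀ k : ℕ,
      ((c (i0 + (k : ZMod n))).card = m ∧ (c (i0 + (k : ZMod n) + 1), c (i0 + (k : ZMod n))) ∈ M₀) ∨
      ((c (i0 + (k : ZMod n))).card = m + 1 ∧ (c (i0 + (k : ZMod n)), c (i0 + (k : ZMod n) + 1)) ∈ arcs Δ ∧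
        (c (i0 + (k : ZMod n)), c (i0 + (k : ZMod n) + 1)) ∉ M₀) := by
    intro k
    rcases Nat.even_or_odd k with ⟨t, ht⟩ | ⟨t, ht⟩
    · left
      have h2t : (k : ZMod n) = ((2*t : ℕ) : ZMod n) := by rw [ht]; push_cast; ring
      rw [h2t]
      exact ⟨main t, (claimA _ (main t)).1⟩
    · right
      have h2t : (i0 + (k : ZMod n)) = i0 + ((2*t : ℕ) : ZMod n) + 1 := by
        rw [ht]; push_cast; ring
      obtain ⟨hmat, hcard1⟩ := claimA _ (main t)
      obtain ⟨harc, hnm, -⟩ := claimB _ hmat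
      rw [h2t]
      exact ⟨hcard1, harc, hnm⟩
  intro i
  have hi : i0 + (((i - i0).val : ℕ) : ZMod n) = i := by
    rw [ZMod.natCast_rightInverse (i - i0)]
    ring
  have := full (i - i0).val
  rwa [hi] at this

end Alternate

lemma card_filter_partition3 {α : Type*} (s : Finset α) (p q u : α → Prop)
    [DecidablePred p] [DecidablePred q] [DecidablePred u]
    (hdisj : ∀ x ∈ s, ¬ (p x ∧ q x))
    (hu : ∀ x ∈ s, u x ↔ ¬ p x ∧ ¬ q x) :
    s.card = (s.filter p).card + (s.filter q).card + (s.filter u).card := by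
  classical
  have d1 : Disjoint (s.filter p) (s.filter q) := by
    rw [Finset.disjoint_left]
    intro x hx hy
    rw [Finset.mem_filter] at hx hy
    exact hdisj x hx.1 ⟨hx.2, hy.2⟩
  have d2 : Disjoint (s.filter p ∪ s.filter q) (s.filter u) := by
    rw [Finset.disjoint_left]
    intro x hx hy
    rw [Finset.mem_union] at hx
    rw [Finset.mem_filter] at hy
    have h2 := (hu x hy.1).1 hy.2
    rcases hx with hx | hx <;> rw [Finset.mem_filter] at hx
    · exact h2.1 hx.2
    · exact h2.2 hx.2
  have hcover : s.filter p ∪ s.filter q ∪ s.filter u = s := by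
    ext x
    simp only [Finset.mem_union, Finset.mem_filter]
    constructor
    · rintro ((h | h) | h) <;> exact h.1
    · intro hx
      by_cases hp : p x
      · exact Or.inl (Or.inl ⟨hx, hp⟩)
      by_cases hq : q x
      · exact Or.inl (Or.inr ⟨hx, hq⟩)
      · exact Or.inr ⟨hx, (hu x hx).2 ⟨hp, hq⟩⟩
  calc s.card = (s.filter p ∪ s.filter q ∪ s.filter u).card := by rw [hcover]
    _ = (s.filter p ∪ s.filter q).card + (s.filter u).card := Finset.card_union_of_disjoint d2
    _ = _ := by rw [Finset.card_union_of_disjoint d1]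

lemma card_filter_partition2 {α : Type*} (s : Finset α) (p u : α → Prop)
    [DecidablePred p] [DecidablePred u]
    (hu : ∀ x ∈ s, u x ↔ ¬ p x) :
    s.card = (s.filter p).card + (s.filter u).card := by
  classical
  have d1 : Disjoint (s.filter p) (s.filter u) := by
    rw [Finset.disjoint_left]
    intro x hx hy
    rw [Finset.mem_filter] at hx hy
    exact (hu x hx.1).1 hy.2 hx.2
  have hcover : s.filter p ∪ s.filter u = s := by
    ext x
    simp only [Finset.mem_union, Finset.mem_filter]
    constructor
    · rintro (h | h) <;> exact h.1
    · intro hx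
      by_cases hp : p x
      · exact Or.inl ⟨hx, hp⟩
      · exact Or.inr ⟨hx, (hu x hx).2 hp⟩
  calc s.card = (s.filter p ∪ s.filter u).card := by rw [hcover]
    _ = _ := Finset.card_union_of_disjoint d1

lemma gam_adj {Δ : SC V} {M : Finset (Finset V × Finset V)} {u v : V} :
    (Gam Δ M).Adj u v ↔
      u ≠ v ∧ ({u, v} : Finset V) ∈ Δ.faces ∧ ∀ t, (t, ({u, v} : Finset V)) ∉ M :=
  Iff.rfl

/-- From any Morse matching `M` on a connected simplicial
complex of dimension at least 1, one obtains a Morse matching `M'` with exactly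
one critical vertex, the same number of critical faces in every dimension
`≥ 2`, and no more critical faces in total. -/
theorem exists_single_critical_vertex_matching (Δ : SC V)
    (M : Finset (Finset V × Finset V)) (hM : IsMorse Δ M)
    (hconn : (graphOf Δ).Connected) (hdim : ∃ F ∈ Δ.faces, 2 ≤ F.card) :
    ∃ M' : Finset (Finset V × Finset V), IsMorse Δ M' ∧
      critCount Δ M' 0 = 1 ∧
      (∀ j, 2 ≤ j → critCount Δ M' j = critCount Δ M j) ∧
      critTotal Δ M' ≤ critTotal Δ M := by
  haveI : Finite V := finite_V hconn hdim
  haveI : Fintype V := Fintype.ofFinite V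
  obtain ⟨r⟩ := hconn.nonempty
  have hΓc : (Gam Δ M).Connected := gam_connected hM hconn
  have hsing : ∀ v : V, ({v} : Finset V) ∈ Δ.faces := singleton_face hconn hdim
  set Γ := Gam Δ M with hΓ
  set d : V → ℕ := fun v => Γ.dist r v with hd
  -- parent function along shortest paths to the root
  have hparex : ∀ v : V, v ≠ r → ∃ u, Γ.Adj u v ∧ d u < d v := by
    intro v hv
    have hreach : Γ.Reachable v r := hΓc.preconnected v r
    obtain ⟨p, hp⟩ := hreach.exists_walk_length_eq_dist
    cases p with
    | nil => exact absurd rfl hv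
    | cons h q =>
      rename_i u
      refine ⟨u, h.symm, ?_⟩
      have h1 : Γ.dist u r ≤ q.length := SimpleGraph.dist_le q
      have h2 : q.length + 1 = Γ.dist v r := by simpa using hp
      simp only [hd]
      rw [SimpleGraph.dist_comm (u := r) (v := u), SimpleGraph.dist_comm (u := r) (v := v)]
      omega
  obtain ⟨par, hpar⟩ : ∃ par : V → V, ∀ v : V, v ≠ r → Γ.Adj (par v) v ∧ d (par v) < d v := by
    refine ⟨fun v => if h : v = r then v else Classical.choose (hparex v h), ?_⟩
    intro v hv
    simp only [dif_neg hv]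
    exact Classical.choose_spec (hparex v hv)
  -- facts about tree edges
  have parne : ∀ v : V, v ≠ r → par v ≠ v := fun v hv => (hpar v hv).1.ne
  have treeface : ∀ v : V, v ≠ r → ({par v, v} : Finset V) ∈ Δ.faces :=
    fun v hv => (gam_adj.1 (hpar v hv).1).2.1
  have treenotri : ∀ v : V, v ≠ r → ∀ t, (t, ({par v, v} : Finset V)) ∉ M :=
    fun v hv => (gam_adj.1 (hpar v hv).1).2.2
  have treecard : ∀ v : V, v ≠ r → ({par v, v} : Finset V).card = 2 := by
    intro v hv
    rw [Finset.card_insert_of_notMem (by simp [parne v hv]), Finset.card_singleton]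
  have tdistinct : ∀ v w : V, v ≠ r → w ≠ r → v ≠ w →
      ({par v, v} : Finset V) ≠ {par w, w} := by
    intro v w hv hw hvw heq
    have hvm : v ∈ ({par w, w} : Finset V) := by rw [← heq]; simp
    have hwm : w ∈ ({par v, v} : Finset V) := by rw [heq]; simp
    simp only [Finset.mem_insert, Finset.mem_singleton] at hvm hwm
    rcases hvm with hv1 | hv1
    · rcases hwm with hw1 | hw1
      · have d1 := (hpar v hv).2
        have d2 := (hpar w hw).2
        rw [← hw1] at d1
        rw [← hv1] at d2
        omega
      · exact hvw hw1.symm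
    · exact hvw hv1
  -- the new matching
  set T : Finset (Finset V × Finset V) :=
    (Finset.univ.filter (fun v : V => v ≠ r)).image
      (fun v => (({par v, v} : Finset V), ({v} : Finset V))) with hT
  set M' := T ∪ M.filter (fun a => 2 ≤ a.2.card) with hMp
  have memT : ∀ a : Finset V × Finset V,
      a ∈ T ↔ ∃ v : V, v ≠ r ∧ a = (({par v, v} : Finset V), ({v} : Finset V)) := by
    intro a
    simp only [hT, Finset.mem_image, Finset.mem_filter, Finset.mem_univ, true_and]
    constructor
    · rintro ⟨v, hv, h⟩; exact ⟨v, hv, h.symm⟩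
    · rintro ⟨v, hv, h⟩; exact ⟨v, hv, h.symm⟩
  have treearc : ∀ v : V, v ≠ r → (({par v, v} : Finset V), ({v} : Finset V)) ∈ arcs Δ := by
    intro v hv
    refine mem_arcs'.2 ⟨treeface v hv, hsing v, by simp, ?_⟩
    simp [treecard v hv]
  -- membership facts for M'
  have memM' : ∀ a : Finset V × Finset V, a ∈ M' ↔ a ∈ T ∨ (a ∈ M ∧ 2 ≤ a.2.card) := by
    intro a
    simp [hMp]
  have hMfacts : ∀ a ∈ M, a ∈ arcs Δ := fun a ha => hM.1.1 ha
  have filtfacts : ∀ a : Finset V × Finset V, a ∈ M → 2 ≤ a.2.card →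
      3 ≤ a.1.card := by
    intro a ha h2
    have := (mem_arcs'.1 (hMfacts a ha)).2.2.2
    omega
  have hM'arcs : M' ⊆ arcs Δ := by
    intro a ha
    rcases (memM' a).1 ha with ht | ⟨hm, -⟩
    · obtain ⟨v, hv, rfl⟩ := (memT a).1 ht
      exact treearc v hv
    · exact hMfacts a hm
  have hmatch : IsMatching Δ M' := by
    refine ⟨hM'arcs, ?_⟩
    intro a ha b hb hab
    rcases (memM' a).1 ha with hat | ⟨ham, ha2⟩
    · obtain ⟨v, hv, rfl⟩ := (memT a).1 hat
      rcases (memM' b).1 hb with hbt | ⟨hbm, hb2⟩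
      · obtain ⟨w, hw, rfl⟩ := (memT b).1 hbt
        have hvw : v ≠ w := fun h => hab (by rw [h])
        refine ⟨?_, ?_, ?_, ?_⟩ <;> intro h <;> dsimp only at h
        · exact tdistinct v w hv hw hvw h
        · have := treecard v hv; rw [h] at this; simp at this
        · have := treecard w hw; rw [← h] at this; simp at this
        · exact hvw (Finset.singleton_injective h)
      · have hb3 := filtfacts b hbm hb2
        refine ⟨?_, ?_, ?_, ?_⟩ <;> intro h <;> dsimp only at h
        · have := treecard v hv; rw [h] at this; omega
        · exact treenotri v hv b.1 (by rw [h]; exact hbm)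
        · rw [← h] at hb3; simp at hb3
        · rw [← h] at hb2; simp at hb2
    · rcases (memM' b).1 hb with hbt | ⟨hbm, hb2⟩
      · obtain ⟨w, hw, rfl⟩ := (memT b).1 hbt
        have ha3 := filtfacts a ham ha2
        refine ⟨?_, ?_, ?_, ?_⟩ <;> intro h <;> dsimp only at h
        · have := treecard w hw; rw [← h] at this; omega
        · rw [h] at ha3; simp at ha3
        · exact treenotri w hw a.1 (by rw [← h]; exact ham)
        · rw [h] at ha2; simp at ha2
      · exact hM.1.2 a ham b hbm hab
  have hacyc : ∀ (n : ℕ) (c : ZMod n → Finset V), ¬ IsDirCycle (HMrel Δ M') n c := by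
    intro n c hcyc
    obtain ⟨m, hmin, halt⟩ := cycle_alternates hmatch hcyc
    obtain ⟨hn2, hinj, hstep⟩ := hcyc
    haveI : NeZero n := ⟨by omega⟩
    have hfaces : ∀ i, c i ∈ Δ.faces := fun i => (hm_mem_faces hM'arcs (hstep i)).1
    have hpos : ∀ i, 1 ≤ (c i).card := fun i =>
      Finset.card_pos.2 (Δ.nonempty_mem _ (hfaces i))
    have hex1 : ∃ i : ZMod n, (c i).card = m := by
      rcases halt 0 with ⟨hcard, -⟩ | ⟨hc0, harc, -⟩
      · exact ⟨0, hcard⟩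
      · refine ⟨0 + 1, ?_⟩
        have := (mem_arcs'.1 harc).2.2.2
        dsimp only at this
        omega
    have hm1 : 1 ≤ m := by
      obtain ⟨i, hi⟩ := hex1
      have := hpos i
      omega
    by_cases hm2 : 2 ≤ m
    · -- the cycle is a cycle of H(M)
      apply hM.2 n c
      refine ⟨hn2, hinj, ?_⟩
      intro i
      rcases halt i with ⟨hcard, hmat⟩ | ⟨hcard, harc, hnm⟩
      · rcases (memM' _).1 hmat with ht | ⟨hm0, -⟩
        · obtain ⟨v, hv, heq⟩ := (memT _).1 ht
          have h2 : c i = {v} := (Prod.ext_iff.1 heq).2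
          rw [h2] at hcard
          simp at hcard
          omega
        · exact Or.inr hm0
      · have hc2 : 2 ≤ (c (i+1)).card := by
          have := (mem_arcs'.1 harc).2.2.2
          dsimp only at this
          omega
        refine Or.inl ⟨harc, fun hmem => hnm ((memM' _).2 (Or.inr ⟨hmem, hc2⟩))⟩
    · -- m = 1 : descend along the tree, contradiction
      have hm1' : m = 1 := by omega
      subst hm1'
      have key : ∀ i : ZMod n, (c i).card = 1 →
          ∃ v : V, v ≠ r ∧ c i = {v} ∧ c (i+1+1) = {par v} ∧ (c (i+1+1)).card = 1 := by
        intro i hci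
        rcases halt i with ⟨-, hmat⟩ | ⟨hcard, -, -⟩
        swap
        · omega
        rcases (memM' _).1 hmat with ht | ⟨-, h2⟩
        swap
        · dsimp only at h2; omega
        obtain ⟨v, hv, heq⟩ := (memT _).1 ht
        have hcv : c i = {v} := (Prod.ext_iff.1 heq).2
        have hce : c (i+1) = {par v, v} := (Prod.ext_iff.1 heq).1
        rcases halt (i+1) with ⟨hcard1, -⟩ | ⟨-, harc1, hnm1⟩
        · rw [hce, Finset.card_insert_of_notMem (by simp [parne v hv])] at hcard1
          simp at hcard1
        have hsub : c (i+1+1) ⊆ c (i+1) := (mem_arcs'.1 harc1).2.2.1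
        have hcard2 : (c (i+1+1)).card = 1 := by
          have h3 := (mem_arcs'.1 harc1).2.2.2
          dsimp only at h3
          have h4 : (c (i+1)).card = 2 := by
            rw [hce, Finset.card_insert_of_notMem (by simp [parne v hv])]; simp
          omega
        obtain ⟨x, hx⟩ := Finset.card_eq_one.1 hcard2
        have hxmem : x ∈ ({par v, v} : Finset V) := by
          rw [← hce]
          exact hsub (by rw [hx]; simp)
        simp only [Finset.mem_insert, Finset.mem_singleton] at hxmem
        rcases hxmem with hx1 | hx1
        · exact ⟨v, hv, hcv, by rw [hx, hx1], hcard2⟩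
        · exfalso
          apply hnm1
          have : c (i+1+1) = c i := by rw [hx, hx1, hcv]
          rw [this]
          exact hmat
      obtain ⟨i1, hi1⟩ := hex1
      set A : ℕ → ZMod n := fun k => i1 + ((2*k : ℕ) : ZMod n) with hA
      have hAsucc : ∀ k : ℕ, A (k+1) = A k + 1 + 1 := by
        intro k
        simp only [hA]
        push_cast
        ring
      have hAcard : ∀ k : ℕ, (c (A k)).card = 1 := by
        intro k
        induction k with
        | zero => simpa [hA] using hi1
        | succ k ihk =>
          obtain ⟨v, -, -, -, hc⟩ := key (A k) ihk
          rw [hAsucc k]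
          exact hc
      set vtx : ℕ → V := fun k => (Finset.card_eq_one.1 (hAcard k)).choose with hvtx
      have hvtxspec : ∀ k, c (A k) = {vtx k} := fun k =>
        (Finset.card_eq_one.1 (hAcard k)).choose_spec
      have hdec : ∀ k : ℕ, d (vtx (k+1)) < d (vtx k) := by
        intro k
        obtain ⟨v, hvne, hcv, hnext, -⟩ := key (A k) (hAcard k)
        have hvv : v = vtx k := by
          have := hvtxspec k
          rw [hcv] at this
          exact Finset.singleton_injective this
        have hpv : vtx (k+1) = par v := by
          have h1 := hvtxspec (k+1)
          rw [hAsucc k, hnext] at h1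
          exact (Finset.singleton_injective h1).symm
        rw [hpv, ← hvv]
        exact (hpar v hvne).2
      have hbound : ∀ k : ℕ, d (vtx k) + k ≤ d (vtx 0) := by
        intro k
        induction k with
        | zero => omega
        | succ k ihk => have := hdec k; omega
      have := hbound (d (vtx 0) + 1)
      omega
  -- the unique critical vertex
  have hcrit0 : critCount Δ M' 0 = 1 := by
    rw [critCount, Finset.card_eq_one]
    refine ⟨({r} : Finset V), ?_⟩
    ext F
    simp only [Finset.mem_filter, Finset.mem_singleton]
    constructor
    · rintro ⟨hFf, hc1, hunm⟩
      obtain ⟨v, rfl⟩ := Finset.card_eq_one.1 hc1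
      by_contra hne
      have hvr : v ≠ r := fun h => hne (by rw [h])
      have hmem : (({par v, v} : Finset V), ({v} : Finset V)) ∈ M' :=
        (memM' _).2 (Or.inl ((memT _).2 ⟨v, hvr, rfl⟩))
      exact (hunm _ hmem).2 rfl
    · rintro rfl
      refine ⟨hsing r, by simp, ?_⟩
      intro a ha
      rcases (memM' a).1 ha with ht | ⟨ham, ha2⟩
      · obtain ⟨v, hv, rfl⟩ := (memT a).1 ht
        constructor
        · intro h; dsimp only at h; have := treecard v hv; rw [h] at this; simp at this
        · intro h; dsimp only at h; exact hv (Finset.singleton_injective h)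
      · have ha3 := filtfacts a ham ha2
        constructor
        · intro h; rw [h] at ha3; simp at ha3
        · intro h; rw [h] at ha2; simp at ha2
  -- faces of dimension ≥ 2 are critical in M' iff critical in M
  have hface_unm_iff : ∀ F ∈ Δ.faces, 3 ≤ F.card →
      ((∀ a ∈ M', a.1 ≠ F ∧ a.2 ≠ F) ↔ (∀ a ∈ M, a.1 ≠ F ∧ a.2 ≠ F)) := by
    intro F hF h3
    constructor
    · intro h a ha
      have harc := mem_arcs'.1 (hMfacts a ha)
      constructor
      · intro h1
        have h2 : 2 ≤ a.2.card := by rw [h1] at harc; omega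
        exact (h a ((memM' a).2 (Or.inr ⟨ha, h2⟩))).1 h1
      · intro h1
        have h2 : 2 ≤ a.2.card := by rw [h1]; omega
        exact (h a ((memM' a).2 (Or.inr ⟨ha, h2⟩))).2 h1
    · intro h a ha
      rcases (memM' a).1 ha with ht | ⟨ham, -⟩
      · obtain ⟨v, hv, rfl⟩ := (memT a).1 ht
        constructor
        · intro h1; dsimp only at h1; have := treecard v hv; rw [h1] at this; omega
        · intro h1; dsimp only at h1; rw [← h1] at h3; simp at h3
      · exact h a ham
  have hcritj : ∀ j, 2 ≤ j → critCount Δ M' j = critCount Δ M j := by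
    intro j hj
    unfold critCount
    congr 1
    ext F
    simp only [Finset.mem_filter]
    constructor
    · rintro ⟨hF, hc, hu⟩; exact ⟨hF, hc, (hface_unm_iff F hF (by omega)).1 hu⟩
    · rintro ⟨hF, hc, hu⟩; exact ⟨hF, hc, (hface_unm_iff F hF (by omega)).2 hu⟩
  -- counting
  set Vs := Δ.faces.filter (fun F => F.card = 1) with hVsdef
  set Ed := Δ.faces.filter (fun F => F.card = 2) with hEddef
  have base : ∀ M₀ : Finset (Finset V × Finset V), critTotal Δ M₀ =
      (Δ.faces.filter (fun F => ∀ a ∈ M₀, a.1 ≠ F ∧ a.2 ≠ F)).card := by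
    intro M₀
    rw [critTotal]
    congr 1
    ext F
    simp only [Finset.mem_filter]
  have totsplit : ∀ M₀ : Finset (Finset V × Finset V), critTotal Δ M₀ =
      (Vs.filter (fun F => ∀ a ∈ M₀, a.1 ≠ F ∧ a.2 ≠ F)).card +
      (Ed.filter (fun F => ∀ a ∈ M₀, a.1 ≠ F ∧ a.2 ≠ F)).card +
      (Δ.faces.filter (fun F => 3 ≤ F.card ∧ ∀ a ∈ M₀, a.1 ≠ F ∧ a.2 ≠ F)).card := by
    intro M₀
    rw [base M₀]
    have h1 := Finset.card_filter_add_card_filter_not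
      (s := Δ.faces.filter (fun F => ∀ a ∈ M₀, a.1 ≠ F ∧ a.2 ≠ F)) (p := fun F => F.card = 1)
    have h2 := Finset.card_filter_add_card_filter_not
      (s := (Δ.faces.filter (fun F => ∀ a ∈ M₀, a.1 ≠ F ∧ a.2 ≠ F)).filter
        (fun F => ¬ F.card = 1)) (p := fun F => F.card = 2)
    have e1 : (Δ.faces.filter (fun F => ∀ a ∈ M₀, a.1 ≠ F ∧ a.2 ≠ F)).filter
        (fun F => F.card = 1) = Vs.filter (fun F => ∀ a ∈ M₀, a.1 ≠ F ∧ a.2 ≠ F) := by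
      ext F
      simp only [Finset.mem_filter, hVsdef]
      tauto
    have e2 : ((Δ.faces.filter (fun F => ∀ a ∈ M₀, a.1 ≠ F ∧ a.2 ≠ F)).filter
        (fun F => ¬ F.card = 1)).filter (fun F => F.card = 2)
        = Ed.filter (fun F => ∀ a ∈ M₀, a.1 ≠ F ∧ a.2 ≠ F) := by
      ext F
      simp only [Finset.mem_filter, hEddef]
      constructor
      · rintro ⟨⟨⟨hf, hu⟩, -⟩, hc⟩; exact ⟨⟨hf, hc⟩, hu⟩
      · rintro ⟨⟨hf, hc⟩, hu⟩; exact ⟨⟨⟨hf, hu⟩, by omega⟩, hc⟩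
    have e3 : ((Δ.faces.filter (fun F => ∀ a ∈ M₀, a.1 ≠ F ∧ a.2 ≠ F)).filter
        (fun F => ¬ F.card = 1)).filter (fun F => ¬ F.card = 2)
        = Δ.faces.filter (fun F => 3 ≤ F.card ∧ ∀ a ∈ M₀, a.1 ≠ F ∧ a.2 ≠ F) := by
      ext F
      simp only [Finset.mem_filter]
      constructor
      · rintro ⟨⟨⟨hf, hu⟩, hn1⟩, hn2⟩
        have := Finset.card_pos.2 (Δ.nonempty_mem F hf)
        exact ⟨hf, by omega, hu⟩
      · rintro ⟨hf, h3, hu⟩; exact ⟨⟨⟨hf, hu⟩, by omega⟩, by omega⟩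
    have c1 := congrArg Finset.card e1
    have c2 := congrArg Finset.card e2
    have c3 := congrArg Finset.card e3
    omega
  -- the critical vertices of M'
  have ha1 : (Vs.filter (fun F => ∀ a ∈ M', a.1 ≠ F ∧ a.2 ≠ F)).card = 1 := by
    rw [Finset.card_eq_one]
    refine ⟨({r} : Finset V), ?_⟩
    ext F
    simp only [Finset.mem_filter, Finset.mem_singleton, hVsdef]
    constructor
    · rintro ⟨⟨hFf, hc1⟩, hunm⟩
      obtain ⟨v, rfl⟩ := Finset.card_eq_one.1 hc1
      by_contra hne
      have hvr : v ≠ r := fun h => hne (by rw [h])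
      have hmem : (({par v, v} : Finset V), ({v} : Finset V)) ∈ M' :=
        (memM' _).2 (Or.inl ((memT _).2 ⟨v, hvr, rfl⟩))
      exact (hunm _ hmem).2 rfl
    · rintro rfl
      refine ⟨⟨hsing r, by simp⟩, ?_⟩
      intro a ha
      rcases (memM' a).1 ha with ht | ⟨ham, ha2⟩
      · obtain ⟨v, hv, rfl⟩ := (memT a).1 ht
        constructor
        · intro h; dsimp only at h; have := treecard v hv; rw [h] at this; simp at this
        · intro h; dsimp only at h; exact hv (Finset.singleton_injective h)
      · have ha3 := filtfacts a ham ha2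
        constructor
        · intro h; rw [h] at ha3; simp at ha3
        · intro h; rw [h] at ha2; simp at ha2
  -- high-dimensional parts agree
  have he3 : (Δ.faces.filter (fun F => 3 ≤ F.card ∧ ∀ a ∈ M', a.1 ≠ F ∧ a.2 ≠ F)).card
      = (Δ.faces.filter (fun F => 3 ≤ F.card ∧ ∀ a ∈ M, a.1 ≠ F ∧ a.2 ≠ F)).card := by
    congr 1
    ext F
    simp only [Finset.mem_filter]
    constructor
    · rintro ⟨hf, h3, hu⟩; exact ⟨hf, h3, (hface_unm_iff F hf h3).1 hu⟩
    · rintro ⟨hf, h3, hu⟩; exact ⟨hf, h3, (hface_unm_iff F hf h3).2 hu⟩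
  have edcard : ∀ e ∈ Ed, e.card = 2 := by
    intro e he
    rw [hEddef] at he
    exact (Finset.mem_filter.1 he).2
  have edface : ∀ e ∈ Ed, e ∈ Δ.faces := by
    intro e he
    rw [hEddef] at he
    exact (Finset.mem_filter.1 he).1
  have vscard : ∀ F ∈ Vs, F.card = 1 := by
    intro F hF
    rw [hVsdef] at hF
    exact (Finset.mem_filter.1 hF).2
  -- partition of the edges with respect to M'
  have hEdsplit' : Ed.card =
      (Ed.filter (fun e => ∃ v, v ≠ r ∧ e = ({par v, v} : Finset V))).card +
      (Ed.filter (fun e => ∃ t, (t, e) ∈ M)).card +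
      (Ed.filter (fun F => ∀ a ∈ M', a.1 ≠ F ∧ a.2 ≠ F)).card := by
    apply card_filter_partition3
    · rintro e he ⟨⟨v, hv, rfl⟩, t, ht⟩
      exact treenotri v hv t ht
    · intro e he
      constructor
      · intro hu
        constructor
        · rintro ⟨v, hv, rfl⟩
          have hmem : (({par v, v} : Finset V), ({v} : Finset V)) ∈ M' :=
            (memM' _).2 (Or.inl ((memT _).2 ⟨v, hv, rfl⟩))
          exact (hu _ hmem).1 rfl
        · rintro ⟨t, ht⟩
          have hmem : ((t, e) : _ × _) ∈ M' :=
            (memM' _).2 (Or.inr ⟨ht, by dsimp only; rw [edcard e he]⟩)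
          exact (hu _ hmem).2 rfl
      · rintro ⟨hnt, hntri⟩ a ha
        rcases (memM' a).1 ha with ht | ⟨ham, ha2⟩
        · obtain ⟨v, hv, rfl⟩ := (memT a).1 ht
          constructor
          · intro h; dsimp only at h; exact hnt ⟨v, hv, h.symm⟩
          · intro h; dsimp only at h
            have := edcard e he; rw [← h] at this; simp at this
        · have ha3 := filtfacts a ham ha2
          constructor
          · intro h
            have := edcard e he; rw [h, this] at ha3; omega
          · intro h
            exact hntri ⟨a.1, by rw [← h]; exact ham⟩
  -- there are exactly (n-1) tree edges
  have htreecard :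
      (Ed.filter (fun e => ∃ v, v ≠ r ∧ e = ({par v, v} : Finset V))).card + 1
        = Fintype.card V := by
    have himg : Ed.filter (fun e => ∃ v, v ≠ r ∧ e = ({par v, v} : Finset V))
        = (Finset.univ.filter (fun v : V => v ≠ r)).image
          (fun v => ({par v, v} : Finset V)) := by
      ext e
      simp only [Finset.mem_filter, Finset.mem_image, Finset.mem_univ, true_and]
      constructor
      · rintro ⟨-, v, hv, rfl⟩; exact ⟨v, hv, rfl⟩
      · rintro ⟨v, hv, rfl⟩
        refine ⟨?_, v, hv, rfl⟩
        rw [hEddef, Finset.mem_filter]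
        exact ⟨treeface v hv, treecard v hv⟩
    have hinj : Set.InjOn (fun v => ({par v, v} : Finset V))
        ↑(Finset.univ.filter (fun v : V => v ≠ r)) := by
      intro v hv w hw hvw
      simp only [Finset.coe_filter, Set.mem_setOf_eq] at hv hw
      by_contra hne
      exact tdistinct v w hv.2 hw.2 hne hvw
    rw [himg, Finset.card_image_of_injOn hinj, Finset.filter_ne',
      Finset.card_erase_add_one (Finset.mem_univ r), Finset.card_univ]
  -- partition of the edges with respect to M
  have hEdsplit : Ed.card =
      (Ed.filter (fun e => ∃ w : V, (e, ({w} : Finset V)) ∈ M)).card +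
      (Ed.filter (fun e => ∃ t, (t, e) ∈ M)).card +
      (Ed.filter (fun F => ∀ a ∈ M, a.1 ≠ F ∧ a.2 ≠ F)).card := by
    apply card_filter_partition3
    · rintro e he ⟨⟨w, hw⟩, t, ht⟩
      have hc2 := edcard e he
      have hne : ((e, ({w} : Finset V)) : _ × _) ≠ (t, e) := by
        intro h
        injection h with h1 h2
        rw [← h2] at hc2
        simp at hc2
      exact (hM.1.2 _ hw _ ht hne).2.1 rfl
    · intro e he
      constructor
      · intro hu
        constructor
        · rintro ⟨w, hw⟩
          exact (hu _ hw).1 rfl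
        · rintro ⟨t, ht⟩
          exact (hu _ ht).2 rfl
      · rintro ⟨hnw, hntri⟩ a ha
        have harc := mem_arcs'.1 (hMfacts a ha)
        constructor
        · intro h
          have hc1 : a.2.card = 1 := by
            have h2 := edcard e he
            rw [h, h2] at harc
            omega
          obtain ⟨w, hw⟩ := Finset.card_eq_one.1 hc1
          exact hnw ⟨w, by rw [← hw, ← h]; exact ha⟩
        · intro h
          exact hntri ⟨a.1, by rw [← h]; exact ha⟩
  -- partition of the vertices with respect to M
  have hVsplit : Vs.card =
      (Vs.filter (fun F => ∃ e, (e, F) ∈ M)).card +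
      (Vs.filter (fun F => ∀ a ∈ M, a.1 ≠ F ∧ a.2 ≠ F)).card := by
    apply card_filter_partition2
    intro F hF
    constructor
    · intro hu
      rintro ⟨e, he⟩
      exact (hu _ he).2 rfl
    · intro hne a ha
      have harc := mem_arcs'.1 (hMfacts a ha)
      constructor
      · intro h
        have h0 : a.2.card = 0 := by
          have h1 := vscard F hF
          rw [h, h1] at harc
          omega
        have := Finset.card_pos.2 (Δ.nonempty_mem a.2 harc.2.1)
        omega
      · intro h
        exact hne ⟨a.1, by rw [← h]; exact ha⟩
  -- matched edges are in bijection with matched vertices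
  have hbij : (Ed.filter (fun e => ∃ w : V, (e, ({w} : Finset V)) ∈ M)).card
      = (Vs.filter (fun F => ∃ e, (e, F) ∈ M)).card := by
    apply Finset.card_bij
      (fun e he => ({(Finset.mem_filter.1 he).2.choose} : Finset V))
    · intro e he
      have hspec := (Finset.mem_filter.1 he).2.choose_spec
      have harc := mem_arcs'.1 (hMfacts _ hspec)
      rw [Finset.mem_filter, hVsdef, Finset.mem_filter]
      exact ⟨⟨harc.2.1, by simp⟩, e, hspec⟩
    · intro e1 he1 e2 he2 heq
      have h1 := (Finset.mem_filter.1 he1).2.choose_spec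
      have h2 := (Finset.mem_filter.1 he2).2.choose_spec
      by_contra hne
      have hab : ((e1, ({(Finset.mem_filter.1 he1).2.choose} : Finset V)) : _ × _)
          ≠ (e2, ({(Finset.mem_filter.1 he2).2.choose} : Finset V)) := by
        intro h
        injection h with ha hb
        exact hne ha
      exact (hM.1.2 _ h1 _ h2 hab).2.2.2 heq
    · intro F hF
      rw [Finset.mem_filter] at hF
      obtain ⟨hFv, e0, he0⟩ := hF
      have harc := mem_arcs'.1 (hMfacts _ he0)
      have he0Ed : e0 ∈ Ed := by
        rw [hEddef, Finset.mem_filter]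
        have h1 := vscard F hFv
        refine ⟨harc.1, ?_⟩
        dsimp only at harc
        omega
      obtain ⟨w0, hw0⟩ := Finset.card_eq_one.1 (vscard F hFv)
      have hmemE : e0 ∈ Ed.filter (fun e => ∃ w : V, (e, ({w} : Finset V)) ∈ M) :=
        Finset.mem_filter.2 ⟨he0Ed, w0, by rw [← hw0]; exact he0⟩
      refine ⟨e0, hmemE, ?_⟩
      have hspec := (Finset.mem_filter.1 hmemE).2.choose_spec
      by_cases heq : ((e0, ({(Finset.mem_filter.1 hmemE).2.choose} : Finset V)) : _ × _)
          = (e0, F)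
      · exact (Prod.ext_iff.1 heq).2
      · exact absurd rfl (hM.1.2 _ hspec _ he0 heq).1
  -- at least one vertex is unmatched in M
  have hunmv : ∃ v : V, ∀ e, (e, ({v} : Finset V)) ∉ M := by
    by_contra hno
    push_neg at hno
    have hgex : ∀ v : V, ∃ w, Relation.TransGen (HMrel Δ M) {v} {w} := by
      intro v
      obtain ⟨e, he⟩ := hno v
      have harc := mem_arcs'.1 (hMfacts _ he)
      have hve : v ∈ e := harc.2.2.1 (by simp)
      have hcarde : e.card = 2 := by
        have h4 := harc.2.2.2
        simp at h4
        omega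
      obtain ⟨x, y, hxy, hexy⟩ := Finset.card_eq_two.1 hcarde
      have hother : ∃ w, w ∈ e ∧ w ≠ v := by
        rw [hexy] at hve
        simp only [Finset.mem_insert, Finset.mem_singleton] at hve
        rcases hve with rfl | rfl
        · exact ⟨y, by rw [hexy]; simp, hxy.symm⟩
        · exact ⟨x, by rw [hexy]; simp, hxy⟩
      obtain ⟨w, hwe, hwv⟩ := hother
      have hsub : ({w} : Finset V) ⊆ e := Finset.singleton_subset_iff.2 hwe
      have harc2 : ((e, ({w} : Finset V)) : _ × _) ∈ arcs Δ :=
        mem_arcs'.2 ⟨harc.1, hsing w, hsub, by simp [hcarde]⟩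
      have hnm : ((e, ({w} : Finset V)) : _ × _) ∉ M := by
        intro hmem
        by_cases heq : ((e, ({w} : Finset V)) : _ × _) = (e, ({v} : Finset V))
        · exact hwv (Finset.singleton_injective (Prod.ext_iff.1 heq).2)
        · exact (hM.1.2 _ hmem _ he heq).1 rfl
      have hr1 : HMrel Δ M {v} e := Or.inr he
      have hr2 : HMrel Δ M e {w} := Or.inl ⟨harc2, hnm⟩
      exact ⟨w, (Relation.TransGen.single hr1).tail hr2⟩
    choose g hg using hgex
    have hchain : ∀ k : ℕ, ∀ v : V,
        Relation.TransGen (HMrel Δ M) {v} {g^[k+1] v} := by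
      intro k
      induction k with
      | zero => intro v; simpa using hg v
      | succ k ih =>
        intro v
        have h1 := ih v
        have h2 := hg (g^[k+1] v)
        rw [← Function.iterate_succ_apply' g (k+1) v] at h2
        exact h1.trans h2
    obtain ⟨i, j, hne, heq⟩ := Finite.exists_ne_map_eq_of_infinite (fun k : ℕ => g^[k] r)
    have hwlog : ∀ i j : ℕ, i < j → g^[i] r = g^[j] r → False := by
      intro i j hij heq
      have h1 := hchain (j - i - 1) (g^[i] r)
      rw [← Function.iterate_add_apply] at h1
      have hidx : j - i - 1 + 1 + i = j := by omega
      rw [hidx, ← heq] at h1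
      exact hm_transGen_irrefl hM _ h1
    rcases Nat.lt_or_ge i j with h | h
    · exact hwlog i j h heq
    · exact hwlog j i (by omega : j < i) heq.symm
  have hcrit_v : 1 ≤ (Vs.filter (fun F => ∀ a ∈ M, a.1 ≠ F ∧ a.2 ≠ F)).card := by
    obtain ⟨v, hv⟩ := hunmv
    refine Finset.card_pos.2 ⟨{v}, Finset.mem_filter.2 ⟨?_, ?_⟩⟩
    · rw [hVsdef, Finset.mem_filter]
      exact ⟨hsing v, by simp⟩
    · intro a ha
      have harc := mem_arcs'.1 (hMfacts a ha)
      constructor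
      · intro h
        have h0 := harc.2.2.2
        rw [h] at h0
        simp only [Finset.card_singleton] at h0
        have := Finset.card_pos.2 (Δ.nonempty_mem a.2 harc.2.1)
        omega
      · intro h
        exact hv a.1 (by rw [← h]; exact ha)
  -- number of singleton faces is the number of vertices
  have hVscard : Vs.card = Fintype.card V := by
    have himg : Vs = Finset.univ.image (fun v : V => ({v} : Finset V)) := by
      ext F
      simp only [hVsdef, Finset.mem_filter, Finset.mem_image, Finset.mem_univ, true_and]
      constructor
      · rintro ⟨hf, hc⟩
        obtain ⟨v, rfl⟩ := Finset.card_eq_one.1 hc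
        exact ⟨v, rfl⟩
      · rintro ⟨v, rfl⟩
        exact ⟨hsing v, by simp⟩
    rw [himg, Finset.card_image_of_injective _ Finset.singleton_injective, Finset.card_univ]
  -- assemble
  refine ⟨M', ⟨hmatch, hacyc⟩, hcrit0, hcritj, ?_⟩
  rw [totsplit M', totsplit M]
  omega
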